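/- arXiv:1204.6008 — 2 statements merged into one kernel-verified Lean document; each statement's English description precedes it below -/
import Mathlib

section
/- Let d ≥ 1 and let A : ℝ^d → ℝ^d be an invertible linear map with |det A| = 1. Then the operator norms satisfy ‖A⁻¹‖ ≤ ‖A‖^{d−1}. -/
/-!
Let `σ₀ ≥ ⋯ ≥ σ_{d-1}` be the singular values of `A`. Then `|det A| = σ₀ ⋯ σ_{d-1}`, every
`σᵢ ≤ ‖A‖`, and `σ_{d-1} ‖x‖ ≤ ‖A x‖` because `‖A x‖² = ⟪A*A x, x⟫` is at least the smallest
eigenvalue of `A*A` times `‖x‖²`. Hence `|det A| ‖x‖ ≤ ‖A‖^(d-1) σ_{d-1} ‖x‖ ≤ ‖A‖^(d-1) ‖A x‖`,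
i.e. `‖A⁻¹‖ ≤ ‖A‖^(d-1) / |det A|`.
-/

open Module RCLike
open scoped InnerProductSpace

section

variable {𝕜 E F : Type*} [RCLike 𝕜]
  [NormedAddCommGroup E] [InnerProductSpace 𝕜 E] [FiniteDimensional 𝕜 E]
  [NormedAddCommGroup F] [InnerProductSpace 𝕜 F] [FiniteDimensional 𝕜 F]

namespace LinearMap

namespace IsSymmetric

variable {T : E →ₗ[𝕜] E} {n : ℕ}

theorem re_inner_apply_self_eq_sum_eigenvalues (hT : T.IsSymmetric) (hn : finrank 𝕜 E = n)
    (x : E) :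
    re ⟪T x, x⟫_𝕜 = ∑ i, hT.eigenvalues hn i * ‖(hT.eigenvectorBasis hn).repr x i‖ ^ 2 := by
  rw [← (hT.eigenvectorBasis hn).repr.inner_map_map, PiLp.inner_apply, map_sum]
  refine Finset.sum_congr rfl fun i _ => ?_
  rw [hT.eigenvectorBasis_apply_self_apply, ← smul_eq_mul, inner_smul_left, conj_ofReal,
    inner_self_eq_norm_sq_to_K, ← ofReal_pow, ← ofReal_mul, ofReal_re]

theorem mul_norm_sq_le_re_inner_apply_self (hT : T.IsSymmetric) (hn : finrank 𝕜 E = n) {m : ℝ}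
    (hm : ∀ i, m ≤ hT.eigenvalues hn i) (x : E) : m * ‖x‖ ^ 2 ≤ re ⟪T x, x⟫_𝕜 := by
  rw [hT.re_inner_apply_self_eq_sum_eigenvalues hn, ← (hT.eigenvectorBasis hn).repr.norm_map,
    EuclideanSpace.norm_sq_eq, Finset.mul_sum]
  exact Finset.sum_le_sum fun i _ => mul_le_mul_of_nonneg_right (hm i) (sq_nonneg _)

end IsSymmetric

theorem norm_apply_sq_eq_re_inner_adjoint_comp_self (T : E →ₗ[𝕜] F) (x : E) :
    ‖T x‖ ^ 2 = re ⟪(adjoint T ∘ₗ T) x, x⟫_𝕜 := by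
  rw [comp_apply, adjoint_inner_left, inner_self_eq_norm_sq]

theorem singularValues_mul_norm_le_norm_apply (T : E →ₗ[𝕜] F) (x : E) :
    T.singularValues (finrank 𝕜 E - 1) * ‖x‖ ≤ ‖T x‖ := by
  rcases Nat.eq_zero_or_pos (finrank 𝕜 E) with h | h
  · simp [T.singularValues_of_finrank_le (by omega : finrank 𝕜 E ≤ finrank 𝕜 E - 1)]
  have hlast : finrank 𝕜 E - 1 < finrank 𝕜 E := Nat.sub_one_lt_of_lt h
  have hS := T.isSymmetric_adjoint_comp_self
  have hmin : ∀ i, T.singularValues (finrank 𝕜 E - 1) ^ 2 ≤ hS.eigenvalues rfl i := fun i => by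
    rw [T.sq_singularValues_of_lt rfl hlast]
    exact hS.eigenvalues_antitone rfl (Fin.le_def.2 (Nat.le_sub_one_of_lt i.isLt))
  refine le_of_pow_le_pow_left₀ two_ne_zero (norm_nonneg _) ?_
  rw [mul_pow, T.norm_apply_sq_eq_re_inner_adjoint_comp_self]
  exact hS.mul_norm_sq_le_re_inner_apply_self rfl hmin x

end LinearMap

namespace ContinuousLinearMap

theorem singularValues_le_opNorm (T : E →L[𝕜] F) (i : ℕ) :
    (T : E →ₗ[𝕜] F).singularValues i ≤ ‖T‖ := by
  by_cases hi : i < finrank 𝕜 E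
  · obtain ⟨v, hv⟩ :=
      (T : E →ₗ[𝕜] F).hasEigenvalue_adjoint_comp_self_sq_singularValues hi |>.exists_hasEigenvector
    have hv0 : 0 < ‖v‖ := norm_pos_iff.2 hv.2
    have key : ‖T v‖ = (T : E →ₗ[𝕜] F).singularValues i * ‖v‖ := by
      refine (pow_left_inj₀ (norm_nonneg _)
        (mul_nonneg (LinearMap.singularValues_nonneg _ i) hv0.le) two_ne_zero).1 ?_
      rw [← coe_coe, LinearMap.norm_apply_sq_eq_re_inner_adjoint_comp_self, hv.apply_eq_smul]
      simp [inner_smul_left, inner_self_eq_norm_sq_to_K, mul_pow]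
    refine le_of_mul_le_mul_right ?_ hv0
    exact key ▸ T.le_opNorm v
  · rw [LinearMap.singularValues_of_finrank_le _ (not_lt.1 hi)]
    exact norm_nonneg T

theorem norm_det_le_opNorm_pow_mul_singularValues [Nontrivial E] (A : E →L[𝕜] E) :
    ‖LinearMap.det (A : E →ₗ[𝕜] E)‖ ≤
      ‖A‖ ^ (finrank 𝕜 E - 1) * (A : E →ₗ[𝕜] E).singularValues (finrank 𝕜 E - 1) := by
  have hsucc : finrank 𝕜 E - 1 + 1 = finrank 𝕜 E := Nat.sub_add_cancel finrank_pos
  rw [← LinearMap.normDet_eq_norm_det, LinearMap.normDet_eq_prod_singularValues, ← hsucc,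
    Finset.prod_range_succ, Nat.add_sub_cancel]
  refine mul_le_mul_of_nonneg_right ?_ (LinearMap.singularValues_nonneg _ _)
  simpa using Finset.prod_le_prod (s := Finset.range (finrank 𝕜 E - 1))
    (fun i _ => LinearMap.singularValues_nonneg _ i) fun i _ => A.singularValues_le_opNorm i

theorem norm_det_mul_norm_le_opNorm_pow_mul_norm_apply (A : E →L[𝕜] E) (x : E) :
    ‖LinearMap.det (A : E →ₗ[𝕜] E)‖ * ‖x‖ ≤ ‖A‖ ^ (finrank 𝕜 E - 1) * ‖A x‖ := by
  rcases subsingleton_or_nontrivial E with hE | hE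
  · simp [Subsingleton.elim x 0]
  calc ‖LinearMap.det (A : E →ₗ[𝕜] E)‖ * ‖x‖
      ≤ ‖A‖ ^ (finrank 𝕜 E - 1) * (A : E →ₗ[𝕜] E).singularValues (finrank 𝕜 E - 1) * ‖x‖ :=
        mul_le_mul_of_nonneg_right A.norm_det_le_opNorm_pow_mul_singularValues (norm_nonneg x)
    _ ≤ ‖A‖ ^ (finrank 𝕜 E - 1) * ‖A x‖ := by
        rw [mul_assoc]
        exact mul_le_mul_of_nonneg_left
          ((A : E →ₗ[𝕜] E).singularValues_mul_norm_le_norm_apply x) (by positivity)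

end ContinuousLinearMap

theorem ContinuousLinearEquiv.opNorm_symm_le_opNorm_pow_div_norm_det (A : E ≃L[𝕜] E) :
    ‖(A.symm : E →L[𝕜] E)‖ ≤
      ‖(A : E →L[𝕜] E)‖ ^ (finrank 𝕜 E - 1) / ‖LinearMap.det (A : E →ₗ[𝕜] E)‖ := by
  have hdet : 0 < ‖LinearMap.det (A : E →ₗ[𝕜] E)‖ :=
    norm_pos_iff.2 (A.toLinearEquiv.isUnit_det').ne_zero
  refine ContinuousLinearMap.opNorm_le_bound _ (by positivity) fun y => ?_
  rw [div_mul_eq_mul_div, le_div_iff₀ hdet, mul_comm]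
  simpa using (A : E →L[𝕜] E).norm_det_mul_norm_le_opNorm_pow_mul_norm_apply (A.symm y)

end

theorem stmt13_general (d : ℕ)
    (A : EuclideanSpace ℝ (Fin d) ≃L[ℝ] EuclideanSpace ℝ (Fin d))
    (hdet : |LinearMap.det (A : EuclideanSpace ℝ (Fin d) →ₗ[ℝ] EuclideanSpace ℝ (Fin d))| = 1) :
    ‖(A.symm : EuclideanSpace ℝ (Fin d) →L[ℝ] EuclideanSpace ℝ (Fin d))‖
      ≤ ‖(A : EuclideanSpace ℝ (Fin d) →L[ℝ] EuclideanSpace ℝ (Fin d))‖ ^ (d - 1) := by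
  simpa [Real.norm_eq_abs, hdet] using A.opNorm_symm_le_opNorm_pow_div_norm_det

/-- Let `d ≥ 1` and `A : ℝ^d → ℝ^d` an invertible linear map with `|det A| = 1`. Then the
operator norms satisfy `‖A⁻¹‖ ≤ ‖A‖^{d−1}`. -/
theorem stmt13 (d : ℕ) (hd : 1 ≤ d)
    (A : EuclideanSpace ℝ (Fin d) ≃L[ℝ] EuclideanSpace ℝ (Fin d))
    (hdet : |LinearMap.det (A : EuclideanSpace ℝ (Fin d) →ₗ[ℝ] EuclideanSpace ℝ (Fin d))| = 1) :
    ‖(A.symm : EuclideanSpace ℝ (Fin d) →L[ℝ] EuclideanSpace ℝ (Fin d))‖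
      ≤ ‖(A : EuclideanSpace ℝ (Fin d) →L[ℝ] EuclideanSpace ℝ (Fin d))‖ ^ (d - 1) :=
  stmt13_general d A hdet
end

section
/- Let d ≥ 1 and let φ : ℝ^d → ℝ^d be a bi-Lipschitz homeomorphism preserving Lebesgue measure. Let β : (0,∞) × ℝ^d → ℝ be measurable and bounded, and let μ be the measure on (0,∞) × ℝ^d with density |β(t,x)|²/t with respect to dt ⊗ dx. Suppose μ is a Carleson measure with norm at most M, so μ(B × (0, r_B]) ≤ M·|B| for every ball B of radius r_B. Let μ^{♯φ} be the measure on (0,∞) × ℝ^d with density |β(t, φ(x))|²/t with respect to dt ⊗ dx. Then there is a constant C depending only on d such that for every ball B ⊂ ℝ^d of radius r_B, μ^{♯φ}(B × (0, r_B]) ≤ C·( M + log(K(φ)) · ‖β‖_{L^∞}² )·|B|. -/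
open Metric MeasureTheory Set

noncomputable def Kconst {d : ℕ} (φ : EuclideanSpace ℝ (Fin d) → EuclideanSpace ℝ (Fin d)) : ℝ :=
  ⨆ q : {p : EuclideanSpace ℝ (Fin d) × EuclideanSpace ℝ (Fin d) // p.1 ≠ p.2},
    dist (φ q.1.1) (φ q.1.2) / dist q.1.1 q.1.2 +
      dist q.1.1 q.1.2 / dist (φ q.1.1) (φ q.1.2)

/-!
Since `id × φ` preserves `dt ⊗ dx`, the `μ^{♯φ}`-mass of the box `(0,r] × B` is the `μ`-mass of
`(0,r] × φ(B)`. Split it at height `t = r/K(φ)`. Below `t`, averaging the Carleson condition over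
the balls `B(y,t)` with `y` in the `t`-neighbourhood `U` of `φ(B)` (Tonelli) bounds the mass by
`M·|U|`; since `φ⁻¹` is `K(φ)`-Lipschitz, `φ⁻¹(U) ⊆ 2B`, so `|U| ≤ 2^d |B|`. Above `t` the density
is at most `‖β‖∞²/s`, and `∫_t^r ds/s = log K(φ)`.
-/

open scoped ENNReal NNReal

theorem preimage_thickening_image_subset {X Y : Type*} [PseudoMetricSpace X]
    [PseudoMetricSpace Y] {f : X → Y} {L : ℝ} (hL : 0 < L)
    (hf : ∀ a b, dist a b ≤ L * dist (f a) (f b)) (δ : ℝ) (s : Set X) :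
    f ⁻¹' thickening δ (f '' s) ⊆ thickening (L * δ) s := by
  intro z hz
  obtain ⟨_, ⟨b, hb, rfl⟩, hzb⟩ := mem_thickening_iff.1 hz
  exact mem_thickening_iff.2 ⟨b, hb, (hf z b).trans_lt (mul_lt_mul_of_pos_left hzb hL)⟩

theorem measure_thickening_image_le {X Y : Type*} [PseudoMetricSpace X] [MeasurableSpace X]
    [PseudoMetricSpace Y] [MeasurableSpace Y] [OpensMeasurableSpace Y] {μ : Measure X}
    {ν : Measure Y} {f : X → Y} (hf : MeasurePreserving f μ ν) {L : ℝ} (hL : 0 < L)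
    (hfL : ∀ a b, dist a b ≤ L * dist (f a) (f b)) (δ : ℝ) (s : Set X) :
    ν (thickening δ (f '' s)) ≤ μ (thickening (L * δ) s) := by
  rw [← hf.measure_preimage isOpen_thickening.measurableSet.nullMeasurableSet]
  exact measure_mono (preimage_thickening_image_subset hL hfL δ s)

theorem measure_prod_le_mul_measure_thickening {T E : Type*} [MeasurableSpace T]
    [NormedAddCommGroup E] [NormedSpace ℝ E] [FiniteDimensional ℝ E] [MeasurableSpace E]
    [BorelSpace E] (μ : Measure E) [μ.IsAddHaarMeasure] (ν : Measure (T × E)) [SFinite ν]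
    {I : Set T} (hI : MeasurableSet I) {S : Set E} (hS : MeasurableSet S) {t : ℝ} (ht : 0 < t)
    {M : ℝ≥0∞} (hν : ∀ y, ν (I ×ˢ ball y t) ≤ M * μ (ball y t)) :
    ν (I ×ˢ S) ≤ M * μ (thickening t S) := by
  set U := thickening t S
  set c := μ (ball 0 t)
  have hc₀ : c ≠ 0 := (measure_ball_pos μ 0 ht).ne'
  have hc : c ≠ ∞ := measure_ball_lt_top.ne
  -- Slicing `W` in `y` averages the Carleson condition over `U`; slicing it in `q` gives at
  -- least `c · ν (I ×ˢ S)`, since `ball q.2 t ⊆ U` for `q.2 ∈ S`.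
  set W : Set (E × (T × E)) := {p | p.2.1 ∈ I ∧ dist p.2.2 p.1 < t}
  have hW : MeasurableSet W :=
    (measurable_snd.fst hI).inter
      (measurableSet_lt (measurable_snd.snd.dist measurable_fst) measurable_const)
  have hupper : (μ.restrict U).prod ν W ≤ M * c * μ U := by
    rw [Measure.prod_apply hW]
    calc ∫⁻ y in U, ν (Prod.mk y ⁻¹' W) ∂μ
        ≤ ∫⁻ _ in U, M * c ∂μ := lintegral_mono fun y => by
          have := hν y
          rwa [Measure.addHaar_ball_center] at this
      _ = M * c * μ U := setLIntegral_const U _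
  have hlower : c * ν (I ×ˢ S) ≤ (μ.restrict U).prod ν W := by
    rw [Measure.prod_apply_symm hW, ← lintegral_indicator_const (hI.prod hS)]
    refine lintegral_mono fun q => ?_
    by_cases hq : q ∈ I ×ˢ S
    · have hball : (fun y => (y, q)) ⁻¹' W = ball q.2 t := by
        ext y; simp [W, hq.1, dist_comm]
      rw [indicator_of_mem hq, hball, Measure.restrict_apply measurableSet_ball,
        inter_eq_left.2 (ball_subset_thickening hq.2 t), Measure.addHaar_ball_center]
    · simp [hq]
  rw [← ENNReal.mul_le_mul_iff_right hc₀ hc]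
  calc c * ν (I ×ˢ S) ≤ M * c * μ U := hlower.trans hupper
    _ = c * (M * μ U) := by ring

section Kconst

variable {d : ℕ} {φ : EuclideanSpace ℝ (Fin d) → EuclideanSpace ℝ (Fin d)} {A A' : ℝ≥0}

theorem le_Kconst (hφ : LipschitzWith A φ) (hφ' : AntilipschitzWith A' φ)
    {a b : EuclideanSpace ℝ (Fin d)} (hab : a ≠ b) :
    dist (φ a) (φ b) / dist a b + dist a b / dist (φ a) (φ b) ≤ Kconst φ := by
  refine le_ciSup (f := fun q : {p : EuclideanSpace ℝ (Fin d) × EuclideanSpace ℝ (Fin d) //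
    p.1 ≠ p.2} => dist (φ q.1.1) (φ q.1.2) / dist q.1.1 q.1.2 +
      dist q.1.1 q.1.2 / dist (φ q.1.1) (φ q.1.2)) ⟨A + A', ?_⟩ ⟨(a, b), hab⟩
  rintro _ ⟨⟨⟨x, y⟩, hxy⟩, rfl⟩
  have hxy' : 0 < dist x y := dist_pos.2 hxy
  have hφxy : 0 < dist (φ x) (φ y) := dist_pos.2 (hφ'.injective.ne hxy)
  exact add_le_add ((div_le_iff₀ hxy').2 (hφ.dist_le_mul x y))
    ((div_le_iff₀ hφxy).2 (hφ'.le_mul_dist x y))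

theorem two_le_Kconst [Nontrivial (EuclideanSpace ℝ (Fin d))] (hφ : LipschitzWith A φ)
    (hφ' : AntilipschitzWith A' φ) : 2 ≤ Kconst φ := by
  obtain ⟨a, b, hab⟩ := exists_pair_ne (EuclideanSpace ℝ (Fin d))
  refine le_trans ?_ (le_Kconst hφ hφ' hab)
  have h₁ : 0 < dist a b := dist_pos.2 hab
  have h₂ : 0 < dist (φ a) (φ b) := dist_pos.2 (hφ'.injective.ne hab)
  rw [div_add_div _ _ h₁.ne' h₂.ne', le_div_iff₀ (by positivity)]
  nlinarith [sq_nonneg (dist (φ a) (φ b) - dist a b)]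

theorem dist_le_Kconst_mul_dist (hφ : LipschitzWith A φ) (hφ' : AntilipschitzWith A' φ)
    (a b : EuclideanSpace ℝ (Fin d)) : dist a b ≤ Kconst φ * dist (φ a) (φ b) := by
  rcases eq_or_ne a b with rfl | hab
  · simp
  have hφab : 0 < dist (φ a) (φ b) := dist_pos.2 (hφ'.injective.ne hab)
  rw [← div_le_iff₀ hφab]
  exact (le_add_of_nonneg_left (by positivity)).trans (le_Kconst hφ hφ' hab)

theorem measure_Ioc_prod_image_ball_le [Nontrivial (EuclideanSpace ℝ (Fin d))]
    (hφ : LipschitzWith A φ) (hφ' : AntilipschitzWith A' φ) (hpres : MeasurePreserving φ)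
    (ν : Measure (ℝ × EuclideanSpace ℝ (Fin d))) [SFinite ν] {M : ℝ≥0∞}
    (hν : ∀ y t, 0 < t → ν (Ioc 0 t ×ˢ ball y t) ≤ M * volume (ball y t))
    (x : EuclideanSpace ℝ (Fin d)) {r : ℝ} (hr : 0 < r) :
    ν (Ioc 0 (r / Kconst φ) ×ˢ (φ '' ball x r))
      ≤ M * (ENNReal.ofReal (2 ^ d) * volume (ball x r)) := by
  have hK : 0 < Kconst φ := zero_lt_two.trans_le (two_le_Kconst hφ hφ')
  have ht : 0 < r / Kconst φ := div_pos hr hK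
  have hE : MeasurableSet (φ '' ball x r) :=
    measurableSet_ball.image_of_continuousOn_injOn hφ.continuous.continuousOn hφ'.injective.injOn
  refine (measure_prod_le_mul_measure_thickening volume ν measurableSet_Ioc hE ht
    fun y => hν y _ ht).trans (mul_le_mul_right ?_ _)
  calc volume (thickening (r / Kconst φ) (φ '' ball x r))
      ≤ volume (thickening (Kconst φ * (r / Kconst φ)) (ball x r)) :=
        measure_thickening_image_le hpres hK (dist_le_Kconst_mul_dist hφ hφ') _ _
    _ ≤ volume (ball x (2 * r)) := by
        rw [mul_div_cancel₀ r hK.ne', two_mul]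
        exact measure_mono (thickening_ball x r r)
    _ = ENNReal.ofReal (2 ^ d) * volume (ball x r) := by
        rw [Measure.addHaar_ball_mul volume x zero_le_two, finrank_euclideanSpace_fin,
          Measure.addHaar_ball_center volume x]

end Kconst

theorem lintegral_ofReal_inv_Ioc {a b : ℝ} (ha : 0 < a) (hab : a ≤ b) :
    ∫⁻ t in Ioc a b, ENNReal.ofReal t⁻¹ = ENNReal.ofReal (Real.log (b / a)) := by
  have hint : IntegrableOn (fun t : ℝ => t⁻¹) (Ioc a b) :=
    ((continuousOn_inv₀.mono fun t ht => (ha.trans_le ht.1).ne').integrableOn_Icc).mono_set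
      Ioc_subset_Icc_self
  rw [← ofReal_integral_eq_lintegral_ofReal hint
    ((ae_restrict_mem measurableSet_Ioc).mono fun t ht => inv_nonneg.2 (ha.trans ht.1).le),
    ← intervalIntegral.integral_of_le hab, integral_inv_of_pos ha (ha.trans_le hab)]

theorem ae_abs_le_toReal_eLpNorm_top {α : Type*} [MeasurableSpace α] {μ : Measure α}
    {f : α → ℝ} (hf : eLpNorm f ⊤ μ ≠ ⊤) : ∀ᵐ x ∂μ, |f x| ≤ (eLpNorm f ⊤ μ).toReal := by
  rw [eLpNorm_exponent_top] at hf ⊢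
  filter_upwards [ae_le_eLpNormEssSup (f := f) (μ := μ)] with x hx
  simpa [Real.norm_eq_abs] using ENNReal.toReal_mono hf hx

theorem setLIntegral_sq_div_fst_le {X : Type*} [MeasurableSpace X] (μ : Measure X) [SFinite μ]
    {f : ℝ × X → ℝ} {a b N : ℝ} (ha : 0 < a) (hab : a ≤ b) {S : Set X}
    (hf : ∀ᵐ q ∂(volume.prod μ).restrict (Ioc a b ×ˢ S), |f q| ≤ N) :
    ∫⁻ q in Ioc a b ×ˢ S, ENNReal.ofReal (f q ^ 2 / q.1) ∂(volume.prod μ)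
      ≤ ENNReal.ofReal (N ^ 2 * Real.log (b / a)) * μ S := by
  have hbound : ∀ᵐ q ∂(volume.prod μ).restrict (Ioc a b ×ˢ S),
      ENNReal.ofReal (f q ^ 2 / q.1) ≤ ENNReal.ofReal (N ^ 2) * ENNReal.ofReal q.1⁻¹ := by
    filter_upwards [hf] with q hq
    rw [← ENNReal.ofReal_mul (sq_nonneg N), ← div_eq_mul_inv]
    rcases le_or_gt q.1 0 with hq₁ | hq₁
    · rw [ENNReal.ofReal_of_nonpos (div_nonpos_of_nonneg_of_nonpos (sq_nonneg _) hq₁)]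
      exact zero_le
    · exact ENNReal.ofReal_le_ofReal
        (div_le_div_of_nonneg_right (sq_le_sq' (abs_le.1 hq).1 (abs_le.1 hq).2) hq₁.le)
  calc ∫⁻ q in Ioc a b ×ˢ S, ENNReal.ofReal (f q ^ 2 / q.1) ∂(volume.prod μ)
      ≤ ∫⁻ q in Ioc a b ×ˢ S, ENNReal.ofReal (N ^ 2) * ENNReal.ofReal q.1⁻¹ ∂(volume.prod μ) :=
        lintegral_mono_ae hbound
    _ = (∫⁻ t in Ioc a b, ENNReal.ofReal (N ^ 2) * ENNReal.ofReal t⁻¹) * μ S := by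
        rw [← Measure.prod_restrict]
        simpa using lintegral_prod_mul (μ := volume.restrict (Ioc a b)) (ν := μ.restrict S)
          (f := fun t => ENNReal.ofReal (N ^ 2) * ENNReal.ofReal t⁻¹) (g := fun _ => 1)
          (by fun_prop) aemeasurable_const
    _ = ENNReal.ofReal (N ^ 2 * Real.log (b / a)) * μ S := by
        rw [lintegral_const_mul _ (by fun_prop), lintegral_ofReal_inv_Ioc ha hab,
          ENNReal.ofReal_mul (sq_nonneg N)]

theorem withDensity_sq_div_fst_apply_le {X : Type*} [MeasurableSpace X] (μ : Measure X)
    [SFinite μ] {β : ℝ × X → ℝ}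
    (hβ : eLpNorm β ⊤ ((volume.prod μ).restrict (Ioi 0 ×ˢ univ)) ≠ ⊤) {a b : ℝ} (ha : 0 < a)
    (hab : a ≤ b) {S : Set X} (hS : MeasurableSet S) :
    ((volume.prod μ).restrict (Ioi 0 ×ˢ univ)).withDensity
        (fun q => ENNReal.ofReal (β q ^ 2 / q.1)) (Ioc a b ×ˢ S)
      ≤ ENNReal.ofReal ((eLpNorm β ⊤ ((volume.prod μ).restrict (Ioi 0 ×ˢ univ))).toReal ^ 2 *
          Real.log (b / a)) * μ S := by
  have hsub : Ioc a b ×ˢ S ⊆ Ioi 0 ×ˢ univ :=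
    prod_mono (fun s hs => ha.trans hs.1) (subset_univ _)
  rw [withDensity_apply _ (measurableSet_Ioc.prod hS), Measure.restrict_restrict_of_subset hsub]
  exact setLIntegral_sq_div_fst_le μ ha hab
    (ae_restrict_of_ae_restrict_of_subset hsub (ae_abs_le_toReal_eLpNorm_top hβ))

theorem withDensity_comp_apply_preimage {α β : Type*} [MeasurableSpace α] [MeasurableSpace β]
    {μ : Measure α} {ν : Measure β} {Φ : α → β} (hΦ : MeasurePreserving Φ μ ν)
    {g : β → ℝ≥0∞} (hg : Measurable g) {s : Set β} (hs : MeasurableSet s) :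
    μ.withDensity (g ∘ Φ) (Φ ⁻¹' s) = ν.withDensity g s := by
  rw [withDensity_apply _ (hΦ.measurable hs), withDensity_apply _ hs]
  exact hΦ.setLIntegral_comp_preimage hs hg

theorem withDensity_comp_prodMap_apply {T X : Type*} [MeasurableSpace T] [MeasurableSpace X]
    {ρ : Measure T} {μ : Measure X} [SFinite ρ] [SFinite μ] {φ : X → X}
    (hφ : MeasurePreserving φ μ μ) (hinj : Function.Injective φ) {P I : Set T}
    (hP : MeasurableSet P) (hI : MeasurableSet I) {B : Set X} (hB : MeasurableSet (φ '' B))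
    {g : T × X → ℝ≥0∞} (hg : Measurable g) :
    ((ρ.prod μ).restrict (P ×ˢ univ)).withDensity (fun q => g (q.1, φ q.2)) (I ×ˢ B)
      = ((ρ.prod μ).restrict (P ×ˢ univ)).withDensity g (I ×ˢ (φ '' B)) := by
  have hΦ := ((MeasurePreserving.id ρ).prod hφ).restrict_preimage (hP.prod MeasurableSet.univ)
  rw [preimage_prod_map_prod, preimage_id, preimage_univ] at hΦ
  have := withDensity_comp_apply_preimage hΦ hg (hI.prod hB)
  rwa [preimage_prod_map_prod, preimage_id, preimage_image_eq _ hinj] at this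

/-- Let `φ` be a bi-Lipschitz measure-preserving homeomorphism of `ℝ^d`, `β` measurable and
(essentially) bounded on `(0,∞) × ℝ^d`, and `μ` the measure with density `|β(t,x)|²/t`.
If `μ` is Carleson with norm at most `M`, then the measure `μ^{♯φ}` with density
`|β(t,φ(x))|²/t` satisfies `μ^{♯φ}(B × (0,r_B]) ≤ C·(M + log K(φ)·‖β‖_∞²)·|B|` for every
ball `B`, where `C` depends only on `d`. -/
theorem stmt15 (d : ℕ) (hd : 1 ≤ d) :
    ∃ C : ℝ, 0 < C ∧
      ∀ (φ : EuclideanSpace ℝ (Fin d) → EuclideanSpace ℝ (Fin d)),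
        Function.Bijective φ →
        (∃ A : NNReal, LipschitzWith A φ) →
        (∃ A : NNReal, LipschitzWith A (Function.invFun φ)) →
        MeasurePreserving φ volume volume →
        ∀ β : ℝ × EuclideanSpace ℝ (Fin d) → ℝ, Measurable β →
          eLpNorm β ⊤ (volume.restrict (Ioi (0 : ℝ) ×ˢ univ)) < ⊤ →
          ∀ M : ℝ, 0 ≤ M →
          (∀ (x : EuclideanSpace ℝ (Fin d)) (r : ℝ), 0 < r →
            ((volume.restrict (Ioi (0 : ℝ) ×ˢ univ)).withDensity
                (fun q => ENNReal.ofReal (β q ^ 2 / q.1))) (Ioc (0 : ℝ) r ×ˢ ball x r)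
              ≤ ENNReal.ofReal M * volume (ball x r)) →
          ∀ (x : EuclideanSpace ℝ (Fin d)) (r : ℝ), 0 < r →
            ((volume.restrict (Ioi (0 : ℝ) ×ˢ univ)).withDensity
                (fun q => ENNReal.ofReal (β (q.1, φ q.2) ^ 2 / q.1))) (Ioc (0 : ℝ) r ×ˢ ball x r)
              ≤ ENNReal.ofReal
                  (C * (M + Real.log (Kconst φ) *
                    ((eLpNorm β ⊤ (volume.restrict (Ioi (0 : ℝ) ×ˢ univ))).toReal) ^ 2))
                * volume (ball x r) := by
  refine ⟨2 ^ d, by positivity, ?_⟩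
  intro φ hbij ⟨A, hφ⟩ ⟨A', hφinv⟩ hpres β hβ hβbdd M hM hCar x r hr
  have : Nontrivial (EuclideanSpace ℝ (Fin d)) :=
    Module.nontrivial_of_finrank_pos (R := ℝ) (by rw [finrank_euclideanSpace_fin]; omega)
  have hφ' : AntilipschitzWith A' φ := hφinv.to_rightInverse (Function.leftInverse_invFun hbij.1)
  set K := Kconst φ
  have hK : 2 ≤ K := two_le_Kconst hφ hφ'
  have ht : 0 < r / K := by positivity
  have htr : r / K ≤ r := div_le_self hr.le (by linarith)
  set E := φ '' ball x r
  have hE : MeasurableSet E :=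
    measurableSet_ball.image_of_continuousOn_injOn hφ.continuous.continuousOn hbij.1.injOn
  have hvolE : volume E = volume (ball x r) := by
    rw [← hpres.measure_preimage hE.nullMeasurableSet, preimage_image_eq _ hbij.1]
  set ν := (volume.restrict (Ioi (0 : ℝ) ×ˢ univ)).withDensity
    fun q : ℝ × EuclideanSpace ℝ (Fin d) => ENNReal.ofReal (β q ^ 2 / q.1)
  set N := (eLpNorm β ⊤ (volume.restrict (Ioi (0 : ℝ) ×ˢ univ))).toReal
  calc _ = ν (Ioc 0 r ×ˢ E) :=
        withDensity_comp_prodMap_apply hpres hbij.1 measurableSet_Ioi measurableSet_Ioc hE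
          (by fun_prop)
    _ ≤ ν (Ioc 0 (r / K) ×ˢ E) + ν (Ioc (r / K) r ×ˢ E) := by
        rw [← Ioc_union_Ioc_eq_Ioc ht.le htr, union_prod]
        exact measure_union_le _ _
    _ ≤ ENNReal.ofReal M * (ENNReal.ofReal (2 ^ d) * volume (ball x r))
          + ENNReal.ofReal (N ^ 2 * Real.log (r / (r / K))) * volume E :=
        add_le_add (measure_Ioc_prod_image_ball_le hφ hφ' hpres ν hCar x hr)
          (withDensity_sq_div_fst_apply_le volume hβbdd.ne ht htr hE)
    _ ≤ _ := by
        have hlogK : 0 ≤ Real.log K := Real.log_nonneg (by linarith)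
        have h2d : (1 : ℝ) ≤ 2 ^ d := one_le_pow₀ one_le_two
        rw [div_div_cancel₀ hr.ne', hvolE, ← mul_assoc, ← ENNReal.ofReal_mul hM, ← add_mul,
          ← ENNReal.ofReal_add (by positivity) (by positivity)]
        gcongr
        nlinarith [mul_nonneg (mul_nonneg hlogK (sq_nonneg N)) (sub_nonneg.2 h2d)]
end
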